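/- Let H be a Hilbert space over ℂ, and let E, F, G be subspaces of the topological dual H* such that E = F ⊕ G (algebraic direct sum), G is finite-dimensional with basis φ₁,…,φ_q, and F is closed in H*. Suppose ψ₁,…,ψ_q ∈ H satisfy ⟨φ_i, ψ_j⟩ = δ_{ij} for all i,j and ψ_i belongs to the annihilator F^⊥ ⊆ H of F for each i. Let G₁ ⊆ H be the span of ψ₁,…,ψ_q. Then F^⊥ = E^⊥ ⊕ G₁, where E^⊥, F^⊥ denote the annihilators in H of E, F respectively. -/
import Mathlib


open Submodule

/-- The annihilator in `H` of a subspace of the topological dual of `H`: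
the set of vectors killed by every functional in the subspace. -/
def preAnnihilator {H : Type*} [NormedAddCommGroup H] [NormedSpace ℂ H]
    (S : Submodule ℂ (H →L[ℂ] ℂ)) : Submodule ℂ H where
  carrier := {x | ∀ f ∈ S, f x = 0}
  add_mem' := by
    intro a b ha hb f hf
    simp [map_add, ha f hf, hb f hf]
  zero_mem' := by
    intro f hf
    simp
  smul_mem' := by
    intro c x hx f hf
    simp [hx f hf]

/-- Let `H` be a complex Hilbert space and `E, F, G` subspaces of the dual
with `E = F ⊕ G` (algebraic direct sum), `G` finite dimensional with basis `φ₁,…,φ_q`,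
`F` closed. If `ψ₁,…,ψ_q ∈ H` satisfy `⟨φ_i, ψ_j⟩ = δ_{ij}` and each `ψ_i ∈ F^⊥`, and
`G₁ = span(ψ₁,…,ψ_q)`, then `F^⊥ = E^⊥ ⊕ G₁`. -/
theorem stmt_2
    {H : Type*} [NormedAddCommGroup H] [InnerProductSpace ℂ H] [CompleteSpace H]
    (E F G : Submodule ℂ (H →L[ℂ] ℂ))
    (hsum : E = F ⊔ G) (hdisj : Disjoint F G)
    (hFclosed : IsClosed (F : Set (H →L[ℂ] ℂ)))
    (q : ℕ) (φ : Fin q → (H →L[ℂ] ℂ))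
    (hφindep : LinearIndependent ℂ φ)
    (hφspan : G = Submodule.span ℂ (Set.range φ))
    (ψ : Fin q → H)
    (hbiorth : ∀ i j, φ i (ψ j) = if i = j then 1 else 0)
    (hψF : ∀ i, ψ i ∈ preAnnihilator F) :
    preAnnihilator F = preAnnihilator E ⊔ Submodule.span ℂ (Set.range ψ) ∧
      Disjoint (preAnnihilator E) (Submodule.span ℂ (Set.range ψ)) := by
  have hspanF : Submodule.span ℂ (Set.range ψ) ≤ preAnnihilator F := by
    rw [Submodule.span_le]
    rintro _ ⟨i, rfl⟩
    exact hψF i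
  have hEF : preAnnihilator E ≤ preAnnihilator F := by
    intro x hx f hf
    exact hx f (hsum ▸ Submodule.mem_sup_left hf)
  have hφE : ∀ j, φ j ∈ E := by
    intro j
    exact hsum ▸ Submodule.mem_sup_right (hφspan ▸ Submodule.subset_span ⟨j, rfl⟩)
  have hφy : ∀ (c : Fin q → ℂ) (j : Fin q), φ j (∑ i, c i • ψ i) = c j := by
    intro c j
    rw [map_sum]
    simp [hbiorth]
  constructor
  · apply le_antisymm
    · intro x hx
      set c : Fin q → ℂ := fun i => φ i x with hc
      have hy : (∑ i, c i • ψ i) ∈ Submodule.span ℂ (Set.range ψ) :=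
        Submodule.sum_mem _ fun i _ =>
          Submodule.smul_mem _ _ (Submodule.subset_span ⟨i, rfl⟩)
      have hxyE : x - ∑ i, c i • ψ i ∈ preAnnihilator E := by
        intro f hf
        rw [hsum, Submodule.mem_sup] at hf
        obtain ⟨g, hg, h, hh, rfl⟩ := hf
        have hg0 : g (x - ∑ i, c i • ψ i) = 0 := by
          have h1 := hx g hg
          have h2 := hspanF hy g hg
          simp [map_sub, h1, h2]
        have hh0 : h (x - ∑ i, c i • ψ i) = 0 := by
          rw [hφspan] at hh
          obtain ⟨d, rfl⟩ := (Finsupp.mem_span_range_iff_exists_finsupp).1 hh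
          rw [Finsupp.sum]
          simp only [ContinuousLinearMap.coe_sum', Finset.sum_apply,
            ContinuousLinearMap.coe_smul', Pi.smul_apply, map_sub, hφy, smul_eq_mul, hc]
          simp
        simp [hg0, hh0]
      have hxeq : x = (x - ∑ i, c i • ψ i) + ∑ i, c i • ψ i := by abel
      rw [hxeq]
      exact Submodule.add_mem_sup hxyE hy
    · exact sup_le hEF hspanF
  · rw [Submodule.disjoint_def]
    intro x hxE hxS
    obtain ⟨c, rfl⟩ := (mem_span_range_iff_exists_fun ℂ).1 hxS
    have hc0 : ∀ j, c j = 0 := by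
      intro j
      have := hxE (φ j) (hφE j)
      rwa [hφy c j] at this
    simp [hc0]
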